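/- Under the hypotheses of the previous combinatorial lemma (α supported on S₁ ∪ S₂ ∪ S₃ with the reality condition and the bilinear vanishing conditions), either α vanishes identically on S₁ ∪ S₂, or α vanishes identically on S₃. -/

import Mathlib

def S1 : Set (ℤ × ℤ) := {(1, 0), (-1, 0), (0, 1), (0, -1)}

def S2 : Set (ℤ × ℤ) := {(1, 1), (-1, -1), (-1, 1), (1, -1)}

def S3 : Set (ℤ × ℤ) :=
  {(1, 2), (-1, -2), (1, -2), (-1, 2), (2, 1), (-2, -1), (2, -1), (-2, 1)}

/-!
Reality makes the zero set of `α` symmetric under `k ↦ -k`, so it suffices to look at one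
representative of each pair `±k`. If some coefficient on `S₃` is nonzero, two of the relations
`α j * α k = 0` kill one representative of `S₁` and one of `S₂`, and two exchange relations
`α a * α k = α b * α k'` with `α b = 0` kill the remaining two.
-/

section

variable {α : ℤ × ℤ → ℂ}

theorem apply_neg_eq_zero_iff (hreal : ∀ k : ℤ × ℤ, α (-k) = starRingEnd ℂ (α k))
    (k : ℤ × ℤ) : α (-k) = 0 ↔ α k = 0 := by
  rw [hreal, map_eq_zero]

theorem forall_S1_union_S2_eq_zero (hreal : ∀ k : ℤ × ℤ, α (-k) = starRingEnd ℂ (α k))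
    (h10 : α (1, 0) = 0) (h01 : α (0, 1) = 0) (h11 : α (1, 1) = 0) (hm11 : α (-1, 1) = 0) :
    ∀ k ∈ S1 ∪ S2, α k = 0 := by
  have hneg := apply_neg_eq_zero_iff hreal
  intro k hk
  simp only [S1, S2, Set.mem_union, Set.mem_insert_iff, Set.mem_singleton_iff] at hk
  rcases hk with (rfl | rfl | rfl | rfl) | (rfl | rfl | rfl | rfl)
  · exact h10
  · exact (hneg (1, 0)).mpr h10
  · exact h01
  · exact (hneg (0, 1)).mpr h01
  · exact h11
  · exact (hneg (1, 1)).mpr h11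
  · exact hm11
  · exact (hneg (-1, 1)).mpr hm11

theorem forall_S3_eq_zero (hreal : ∀ k : ℤ × ℤ, α (-k) = starRingEnd ℂ (α k))
    (h12 : α (1, 2) = 0) (h21 : α (2, 1) = 0) (h1m2 : α (1, -2) = 0) (h2m1 : α (2, -1) = 0) :
    ∀ k ∈ S3, α k = 0 := by
  have hneg := apply_neg_eq_zero_iff hreal
  intro k hk
  simp only [S3, Set.mem_insert_iff, Set.mem_singleton_iff] at hk
  rcases hk with rfl | rfl | rfl | rfl | rfl | rfl | rfl | rfl
  · exact h12
  · exact (hneg (1, 2)).mpr h12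
  · exact h1m2
  · exact (hneg (1, -2)).mpr h1m2
  · exact h21
  · exact (hneg (2, 1)).mpr h21
  · exact h2m1
  · exact (hneg (2, -1)).mpr h2m1

theorem forall_S1_union_S2_eq_zero_of_apply_one_two_ne_zero
    (hreal : ∀ k : ℤ × ℤ, α (-k) = starRingEnd ℂ (α k)) (hne : α (1, 2) ≠ 0)
    (e5 : α (1, 0) * α (1, 2) = α (0, 1) * α (2, 1))
    (e10 : α (-1, 2) * α (1, 1) = α (1, 2) * α (-1, 1))
    (z1 : α (0, 1) * α (1, 2) = 0) (z9 : α (1, 2) * α (1, 1) = 0) :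
    ∀ k ∈ S1 ∪ S2, α k = 0 := by
  have h01 : α (0, 1) = 0 := by simpa [hne] using z1
  have h11 : α (1, 1) = 0 := by simpa [hne] using z9
  refine forall_S1_union_S2_eq_zero hreal ?_ h01 h11 ?_
  · simpa [hne, h01] using e5
  · simpa [hne, h11, eq_comm] using e10

theorem forall_S1_union_S2_eq_zero_of_apply_two_one_ne_zero
    (hreal : ∀ k : ℤ × ℤ, α (-k) = starRingEnd ℂ (α k)) (hne : α (2, 1) ≠ 0)
    (e5 : α (1, 0) * α (1, 2) = α (0, 1) * α (2, 1))
    (e9 : α (2, 1) * α (1, -1) = α (2, -1) * α (1, 1))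
    (z2 : α (1, 0) * α (2, 1) = 0) (z10 : α (2, 1) * α (1, 1) = 0) :
    ∀ k ∈ S1 ∪ S2, α k = 0 := by
  have h10 : α (1, 0) = 0 := by simpa [hne] using z2
  have h11 : α (1, 1) = 0 := by simpa [hne] using z10
  have h1m1 : α (1, -1) = 0 := by simpa [hne, h11] using e9
  refine forall_S1_union_S2_eq_zero hreal h10 ?_ h11 ?_
  · simpa [hne, h10, eq_comm] using e5
  · exact (apply_neg_eq_zero_iff hreal (-1, 1)).mp h1m1

theorem forall_S1_union_S2_eq_zero_of_apply_one_neg_two_ne_zero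
    (hreal : ∀ k : ℤ × ℤ, α (-k) = starRingEnd ℂ (α k)) (hne : α (1, -2) ≠ 0)
    (e7 : α (0, -1) * α (2, -1) = α (1, 0) * α (1, -2))
    (e12 : α (1, -2) * α (-1, -1) = α (-1, -2) * α (1, -1))
    (z5 : α (0, -1) * α (1, -2) = 0) (z14 : α (1, -2) * α (1, -1) = 0) :
    ∀ k ∈ S1 ∪ S2, α k = 0 := by
  have h0m1 : α (0, -1) = 0 := by simpa [hne] using z5
  have h1m1 : α (1, -1) = 0 := by simpa [hne] using z14
  have hm1m1 : α (-1, -1) = 0 := by simpa [hne, h1m1] using e12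
  refine forall_S1_union_S2_eq_zero hreal ?_ ?_ ?_ ?_
  · simpa [hne, h0m1, eq_comm] using e7
  · exact (apply_neg_eq_zero_iff hreal (0, 1)).mp h0m1
  · exact (apply_neg_eq_zero_iff hreal (1, 1)).mp hm1m1
  · exact (apply_neg_eq_zero_iff hreal (-1, 1)).mp h1m1

theorem forall_S1_union_S2_eq_zero_of_apply_two_neg_one_ne_zero
    (hreal : ∀ k : ℤ × ℤ, α (-k) = starRingEnd ℂ (α k)) (hne : α (2, -1) ≠ 0)
    (e7 : α (0, -1) * α (2, -1) = α (1, 0) * α (1, -2))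
    (e9 : α (2, 1) * α (1, -1) = α (2, -1) * α (1, 1))
    (z7 : α (1, 0) * α (2, -1) = 0) (z15 : α (1, -1) * α (2, -1) = 0) :
    ∀ k ∈ S1 ∪ S2, α k = 0 := by
  have h10 : α (1, 0) = 0 := by simpa [hne] using z7
  have h1m1 : α (1, -1) = 0 := by simpa [hne] using z15
  have h0m1 : α (0, -1) = 0 := by simpa [hne, h10] using e7
  refine forall_S1_union_S2_eq_zero hreal h10 ?_ ?_ ?_
  · exact (apply_neg_eq_zero_iff hreal (0, 1)).mp h0m1
  · simpa [hne, h1m1, eq_comm] using e9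
  · exact (apply_neg_eq_zero_iff hreal (-1, 1)).mp h1m1

end

theorem stmt_18_general (α : ℤ × ℤ → ℂ)
    (hreal : ∀ k : ℤ × ℤ, α (-k) = starRingEnd ℂ (α k))
    (e5 : α (1, 0) * α (1, 2) = α (0, 1) * α (2, 1))
    (e7 : α (0, -1) * α (2, -1) = α (1, 0) * α (1, -2))
    (e9 : α (2, 1) * α (1, -1) = α (2, -1) * α (1, 1))
    (e10 : α (-1, 2) * α (1, 1) = α (1, 2) * α (-1, 1))
    (e12 : α (1, -2) * α (-1, -1) = α (-1, -2) * α (1, -1))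
    (z1 : α (0, 1) * α (1, 2) = 0)
    (z2 : α (1, 0) * α (2, 1) = 0)
    (z5 : α (0, -1) * α (1, -2) = 0)
    (z7 : α (1, 0) * α (2, -1) = 0)
    (z9 : α (1, 2) * α (1, 1) = 0)
    (z10 : α (2, 1) * α (1, 1) = 0)
    (z14 : α (1, -2) * α (1, -1) = 0)
    (z15 : α (1, -1) * α (2, -1) = 0)
    : (∀ k ∈ S1 ∪ S2, α k = 0) ∨ (∀ k ∈ S3, α k = 0) := by
  by_cases hS3 : α (1, 2) = 0 ∧ α (2, 1) = 0 ∧ α (1, -2) = 0 ∧ α (2, -1) = 0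
  · obtain ⟨h12, h21, h1m2, h2m1⟩ := hS3
    exact .inr (forall_S3_eq_zero hreal h12 h21 h1m2 h2m1)
  simp only [not_and_or] at hS3
  refine .inl ?_
  rcases hS3 with hne | hne | hne | hne
  · exact forall_S1_union_S2_eq_zero_of_apply_one_two_ne_zero hreal hne e5 e10 z1 z9
  · exact forall_S1_union_S2_eq_zero_of_apply_two_one_ne_zero hreal hne e5 e9 z2 z10
  · exact forall_S1_union_S2_eq_zero_of_apply_one_neg_two_ne_zero hreal hne e7 e12 z5 z14
  · exact forall_S1_union_S2_eq_zero_of_apply_two_neg_one_ne_zero hreal hne e7 e9 z7 z15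

/-- Dichotomy for the Fourier coefficients of a chained ghost solution with
λ = 2: either they vanish on all wave vectors of squared norm 1 and 2, or on
all wave vectors of squared norm 5. -/
theorem stmt_18 (α : ℤ × ℤ → ℂ)
    (hsupp : ∀ k : ℤ × ℤ, k ∉ S1 ∪ S2 ∪ S3 → α k = 0)
    (hreal : ∀ k : ℤ × ℤ, α (-k) = starRingEnd ℂ (α k))
    (e1 : α (0, -1) * α (2, 1) = α (0, 1) * α (2, -1))
    (e2 : α (1, 0) * α (-1, 2) = α (-1, 0) * α (1, 2))
    (e3 : α (0, 1) * α (-2, -1) = α (0, -1) * α (-2, 1))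
    (e4 : α (-1, 0) * α (1, -2) = α (1, 0) * α (-1, -2))
    (e5 : α (1, 0) * α (1, 2) = α (0, 1) * α (2, 1))
    (e6 : α (0, 1) * α (-2, 1) = α (-1, 0) * α (-1, 2))
    (e7 : α (0, -1) * α (2, -1) = α (1, 0) * α (1, -2))
    (e8 : α (-1, 0) * α (-1, -2) = α (0, -1) * α (-2, -1))
    (e9 : α (2, 1) * α (1, -1) = α (2, -1) * α (1, 1))
    (e10 : α (-1, 2) * α (1, 1) = α (1, 2) * α (-1, 1))
    (e11 : α (-2, -1) * α (-1, 1) = α (-2, 1) * α (-1, -1))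
    (e12 : α (1, -2) * α (-1, -1) = α (-1, -2) * α (1, -1))
    (z1 : α (0, 1) * α (1, 2) = 0)
    (z2 : α (1, 0) * α (2, 1) = 0)
    (z3 : α (0, 1) * α (-1, 2) = 0)
    (z4 : α (-1, 0) * α (-2, 1) = 0)
    (z5 : α (0, -1) * α (1, -2) = 0)
    (z6 : α (0, -1) * α (-1, -2) = 0)
    (z7 : α (1, 0) * α (2, -1) = 0)
    (z8 : α (-1, 0) * α (-2, -1) = 0)
    (z9 : α (1, 2) * α (1, 1) = 0)
    (z10 : α (2, 1) * α (1, 1) = 0)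
    (z11 : α (-1, 2) * α (-1, 1) = 0)
    (z12 : α (-2, 1) * α (-1, 1) = 0)
    (z13 : α (-1, -2) * α (-1, -1) = 0)
    (z14 : α (1, -2) * α (1, -1) = 0)
    (z15 : α (1, -1) * α (2, -1) = 0)
    (z16 : α (-2, -1) * α (-1, -1) = 0)
    : (∀ k ∈ S1 ∪ S2, α k = 0) ∨ (∀ k ∈ S3, α k = 0) :=
  stmt_18_general α hreal e5 e7 e9 e10 e12 z1 z2 z5 z7 z9 z10 z14 z15
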